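/- Suppose 5β + 2λ < 1 and β < 1/20. If u and v lie in the same connected component of the sparsified graph G̃, then dist_G(u, v) ≤ 2, i.e., u and v have a common neighbor in the original graph G. -/

import Mathlib

open Finset Classical

noncomputable section

variable {V : Type*} [Fintype V] [DecidableEq V]

/-- Closed neighborhood of `v` in `G` (each vertex is its own neighbor). -/
def closedNbhd (G : SimpleGraph V) (v : V) : Finset V :=
  insert v (G.neighborFinset v)

/-- Degree `d(v) = |N(v)|` (closed neighborhoods). -/
def deg (G : SimpleGraph V) (v : V) : ℕ := (closedNbhd G v).card

/-- `u` and `v` are in agreement: `|N(u) △ N(v)| < β·max(d(u), d(v))`. -/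
def Agree (β : ℝ) (G : SimpleGraph V) (u v : V) : Prop :=
  ((symmDiff (closedNbhd G u) (closedNbhd G v)).card : ℝ)
    < β * max (deg G u : ℝ) (deg G v : ℝ)

/-- The graph after Line 1: discard all edges whose endpoints are not in agreement. -/
def agreeGraph (β : ℝ) (G : SimpleGraph V) : SimpleGraph V where
  Adj u v := G.Adj u v ∧ Agree β G u v
  symm := ⟨by
    intro a b h
    refine ⟨h.1.symm, ?_⟩
    have := h.2
    unfold Agree at *
    rwa [symmDiff_comm, max_comm] at this⟩
  loopless := ⟨fun a h => G.loopless.irrefl a h.1⟩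

/-- A vertex is light if it lost more than a `λ`-fraction of its neighbors
when passing from `G` to the agreement graph. -/
def Light (β lam : ℝ) (G : SimpleGraph V) (v : V) : Prop :=
  (deg G v : ℝ) - (deg (agreeGraph β G) v : ℝ) > lam * (deg G v : ℝ)

/-- A vertex is heavy if it is not light. -/
def Heavy (β lam : ℝ) (G : SimpleGraph V) (v : V) : Prop := ¬ Light β lam G v

/-- The sparsified graph `G̃`: additionally discard all edges between two
light vertices. -/
def sparsified (β lam : ℝ) (G : SimpleGraph V) : SimpleGraph V where
  Adj u v := (agreeGraph β G).Adj u v ∧ (Heavy β lam G u ∨ Heavy β lam G v)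
  symm := ⟨fun a b h => ⟨h.1.symm, h.2.symm⟩⟩
  loopless := ⟨fun a h => (agreeGraph β G).loopless.irrefl a h.1⟩

/-!
Each `G̃`-edge joins vertices in agreement, so along a `G̃`-walk degrees shrink by a factor at
least `1 - β` per step while the symmetric differences of closed neighbourhoods add up: a walk
of length `k ≤ 4` gives `|N(x) △ N(y)| ≤ k β (1 - β)⁻ᵏ d(y) ≤ 5 β d(y)`.
For heavy `a`, `b` this is below `(1 - 2λ) d(b)`, so their closed neighbourhoods in the agreement
graph, which keep a `(1 - λ)`-fraction of `N(a)` and `N(b)`, meet; since agreement edges at a heavy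
vertex survive in `G̃`, heavy vertices at `G̃`-distance `≤ 4` are at `G̃`-distance `≤ 2`.
Every `G̃`-edge has a heavy endpoint, so shortcutting along a walk puts any two vertices of a
component at `G̃`-distance `≤ 4`, and then `|N(u) △ N(v)| ≤ 5 β d(v) < d(v)` forces a common
neighbour.
-/

open scoped symmDiff

namespace Finset

variable {α : Type*} [DecidableEq α]

theorem card_symmDiff_add_card_inter (s t : Finset α) : #(s ∆ t) + #(s ∩ t) = #(s ∪ t) := by
  rw [symmDiff_eq_sup_sdiff_inf]
  exact card_sdiff_add_card_eq_card inter_subset_union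

theorem card_le_card_add_card_symmDiff (s t : Finset α) : #s ≤ #t + #(s ∆ t) := by
  have := card_symmDiff_add_card_inter s t
  have := card_le_card (subset_union_left : s ⊆ s ∪ t)
  have := card_le_card (inter_subset_right : s ∩ t ⊆ t)
  omega

theorem card_symmDiff_le_add (s t u : Finset α) : #(s ∆ u) ≤ #(s ∆ t) + #(t ∆ u) :=
  (card_le_card (symmDiff_triangle s t u)).trans (card_union_le _ _)

theorem inter_nonempty_of_card_add_card_symmDiff_lt {s t A B : Finset α} (hA : A ⊆ s)
    (hB : B ⊆ t) (h : #s + #t + #(s ∆ t) < 2 * (#A + #B)) : (A ∩ B).Nonempty := by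
  rw [← card_pos]
  have := card_union_add_card_inter A B
  have := card_union_add_card_inter s t
  have := card_symmDiff_add_card_inter s t
  have := card_le_card (union_subset_union hA hB)
  omega

end Finset

theorem mem_closedNbhd_iff {H : SimpleGraph V} {x w : V} :
    w ∈ closedNbhd H x ↔ w = x ∨ H.Adj x w := by
  simp [closedNbhd]

theorem one_le_deg (H : SimpleGraph V) (x : V) : 1 ≤ deg H x :=
  card_pos.2 ⟨x, mem_insert_self _ _⟩

theorem closedNbhd_mono {H H' : SimpleGraph V} (h : H ≤ H') (x : V) :
    closedNbhd H x ⊆ closedNbhd H' x := by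
  intro w hw
  rw [mem_closedNbhd_iff] at hw ⊢
  exact hw.imp_right (@h x w)

theorem edist_le_two_of_closedNbhd_inter_nonempty {H : SimpleGraph V} {x y : V}
    (h : (closedNbhd H x ∩ closedNbhd H y).Nonempty) : H.edist x y ≤ 2 := by
  obtain ⟨w, hw⟩ := h
  rw [mem_inter, mem_closedNbhd_iff, mem_closedNbhd_iff] at hw
  have hxw : H.edist x w ≤ 1 :=
    SimpleGraph.edist_le_one_iff_adj_or_eq.2 (hw.1.imp_left Eq.symm).symm
  have hwy : H.edist w y ≤ 1 := by
    rw [SimpleGraph.edist_comm]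
    exact SimpleGraph.edist_le_one_iff_adj_or_eq.2 (hw.2.imp_left Eq.symm).symm
  calc H.edist x y ≤ H.edist x w + H.edist w y := SimpleGraph.edist_triangle
    _ ≤ 1 + 1 := add_le_add hxw hwy
    _ = 2 := by norm_num

variable {G : SimpleGraph V} {β lam : ℝ}

theorem Agree.one_sub_mul_max_deg_le {x y : V} (h : Agree β G x y) :
    (1 - β) * max (deg G x : ℝ) (deg G y) ≤ deg G y := by
  have hxy : (deg G x : ℝ) ≤ deg G y + #(closedNbhd G x ∆ closedNbhd G y) := by
    exact_mod_cast card_le_card_add_card_symmDiff _ _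
  have h0 : (0 : ℝ) ≤ #(closedNbhd G x ∆ closedNbhd G y) := Nat.cast_nonneg _
  unfold Agree at h
  rcases le_total (deg G x : ℝ) (deg G y) with hle | hle
  · rw [max_eq_right hle] at h ⊢
    linarith
  · rw [max_eq_left hle] at h ⊢
    linarith

theorem one_sub_pow_mul_deg_le (hβ1 : β ≤ 1) {x y : V} (p : (agreeGraph β G).Walk x y) :
    (1 - β) ^ p.length * deg G x ≤ deg G y := by
  induction p with
  | nil => simp
  | @cons x y z h p ih =>
    have h1β : 0 ≤ 1 - β := by linarith
    calc (1 - β) ^ (p.cons h).length * deg G x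
        ≤ (1 - β) ^ p.length * ((1 - β) * max (deg G x : ℝ) (deg G y)) := by
          rw [SimpleGraph.Walk.length_cons, pow_succ, mul_assoc]
          exact mul_le_mul_of_nonneg_left
            (mul_le_mul_of_nonneg_left (le_max_left _ _) h1β) (pow_nonneg h1β _)
      _ ≤ (1 - β) ^ p.length * deg G y :=
          mul_le_mul_of_nonneg_left h.2.one_sub_mul_max_deg_le (pow_nonneg h1β _)
      _ ≤ deg G z := ih

theorem one_sub_pow_mul_card_symmDiff_le (hβ0 : 0 ≤ β) (hβ1 : β ≤ 1) {x y : V}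
    (p : (agreeGraph β G).Walk x y) :
    (1 - β) ^ p.length * #(closedNbhd G x ∆ closedNbhd G y) ≤ p.length * β * deg G y := by
  induction p with
  | nil => simp
  | @cons x y z h p ih =>
    have h1β : 0 ≤ 1 - β := by linarith
    have hxy : (1 - β) ^ (p.length + 1) * #(closedNbhd G x ∆ closedNbhd G y) ≤ β * deg G z :=
      calc (1 - β) ^ (p.length + 1) * #(closedNbhd G x ∆ closedNbhd G y)
          ≤ (1 - β) ^ (p.length + 1) * (β * max (deg G x : ℝ) (deg G y)) := by
            gcongr
            exact h.2.le
        _ = β * ((1 - β) ^ p.length * ((1 - β) * max (deg G x : ℝ) (deg G y))) := by ring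
        _ ≤ β * ((1 - β) ^ p.length * deg G y) := by
            gcongr
            exact h.2.one_sub_mul_max_deg_le
        _ ≤ β * deg G z := by
            gcongr
            exact one_sub_pow_mul_deg_le hβ1 p
    have hyz : (1 - β) ^ (p.length + 1) * #(closedNbhd G y ∆ closedNbhd G z)
        ≤ p.length * β * deg G z :=
      calc (1 - β) ^ (p.length + 1) * #(closedNbhd G y ∆ closedNbhd G z)
          ≤ (1 - β) ^ p.length * #(closedNbhd G y ∆ closedNbhd G z) :=
            mul_le_mul_of_nonneg_right
              (pow_le_pow_of_le_one h1β (by linarith) (Nat.le_succ _)) (Nat.cast_nonneg _)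
        _ ≤ p.length * β * deg G z := ih
    have htri : (#(closedNbhd G x ∆ closedNbhd G z) : ℝ)
        ≤ #(closedNbhd G x ∆ closedNbhd G y) + #(closedNbhd G y ∆ closedNbhd G z) := by
      exact_mod_cast card_symmDiff_le_add _ _ _
    calc (1 - β) ^ (p.cons h).length * #(closedNbhd G x ∆ closedNbhd G z)
        ≤ (1 - β) ^ (p.length + 1) * (#(closedNbhd G x ∆ closedNbhd G y)
            + #(closedNbhd G y ∆ closedNbhd G z)) := by
          rw [SimpleGraph.Walk.length_cons]
          gcongr
      _ ≤ β * deg G z + p.length * β * deg G z := by linarith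
      _ = (p.cons h).length * β * deg G z := by
          rw [SimpleGraph.Walk.length_cons]
          push_cast
          ring

theorem card_symmDiff_le_of_edist_le_four (hβ0 : 0 ≤ β) (hβ : β < 1 / 20) {x y : V}
    (h : (agreeGraph β G).edist x y ≤ 4) :
    (#(closedNbhd G x ∆ closedNbhd G y) : ℝ) ≤ 5 * β * deg G y := by
  obtain ⟨p, hp⟩ := SimpleGraph.exists_walk_of_edist_ne_top (h.trans_lt (by decide)).ne
  have hp4 : p.length ≤ 4 := by exact_mod_cast hp ▸ h
  have hbound := one_sub_pow_mul_card_symmDiff_le hβ0 (by linarith) p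
  have hbernoulli : 4 / 5 ≤ (1 - β) ^ 4 := by
    have := one_add_mul_le_pow (by linarith : (-2 : ℝ) ≤ -β) 4
    norm_num at this ⊢
    linarith
  have hpow : (1 - β) ^ 4 ≤ (1 - β) ^ p.length :=
    pow_le_pow_of_le_one (by linarith) (by linarith) hp4
  have hlen : (p.length : ℝ) ≤ 4 := by exact_mod_cast hp4
  have hs : (0 : ℝ) ≤ #(closedNbhd G x ∆ closedNbhd G y) := Nat.cast_nonneg _
  have hd : (0 : ℝ) ≤ deg G y := Nat.cast_nonneg _
  nlinarith [mul_le_mul_of_nonneg_right (hbernoulli.trans hpow) hs,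
    mul_le_mul_of_nonneg_right hlen (mul_nonneg hβ0 hd)]

theorem agreeGraph_le : agreeGraph β G ≤ G := fun _ _ h => h.1

theorem sparsified_le_agreeGraph : sparsified β lam G ≤ agreeGraph β G := fun _ _ h => h.1

theorem Heavy.closedNbhd_agreeGraph_subset {a : V} (ha : Heavy β lam G a) :
    closedNbhd (agreeGraph β G) a ⊆ closedNbhd (sparsified β lam G) a := by
  intro w hw
  rw [mem_closedNbhd_iff] at hw ⊢
  exact hw.imp_right fun h => ⟨h, Or.inl ha⟩

theorem Heavy.le_deg_agreeGraph {a : V} (ha : Heavy β lam G a) :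
    (1 - lam) * deg G a ≤ deg (agreeGraph β G) a := by
  unfold Heavy Light at ha
  linarith

theorem Heavy.edist_le_two {a b : V} (ha : Heavy β lam G a) (hb : Heavy β lam G b)
    (hβ0 : 0 ≤ β) (hβ : β < 1 / 20) (hparams : 5 * β + 2 * lam < 1)
    (h : (sparsified β lam G).edist a b ≤ 4) : (sparsified β lam G).edist a b ≤ 2 := by
  have hΔ := card_symmDiff_le_of_edist_le_four hβ0 hβ
    ((SimpleGraph.edist_anti sparsified_le_agreeGraph).trans h)
  apply edist_le_two_of_closedNbhd_inter_nonempty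
  refine Nonempty.mono (inter_subset_inter ha.closedNbhd_agreeGraph_subset
    hb.closedNbhd_agreeGraph_subset) ?_
  refine inter_nonempty_of_card_add_card_symmDiff_lt (closedNbhd_mono agreeGraph_le a)
    (closedNbhd_mono agreeGraph_le b) ?_
  have hA := ha.le_deg_agreeGraph
  have hB := hb.le_deg_agreeGraph
  have hda : (0 : ℝ) ≤ deg G a := Nat.cast_nonneg _
  have hdb : (1 : ℝ) ≤ deg G b := by exact_mod_cast one_le_deg G b
  have hb5 : 5 * β * deg G b < (1 - 2 * lam) * deg G b :=
    mul_lt_mul_of_pos_right (by linarith) (by linarith)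
  have ha2 : 0 ≤ (1 - 2 * lam) * deg G a := mul_nonneg (by linarith) hda
  unfold deg at hda hdb hA hB hΔ hb5 ha2
  have key : (#(closedNbhd G a) + #(closedNbhd G b) + #(closedNbhd G a ∆ closedNbhd G b) : ℝ)
      < 2 * (#(closedNbhd (agreeGraph β G) a) + #(closedNbhd (agreeGraph β G) b)) := by
    linarith
  exact_mod_cast key

theorem exists_heavy_of_sparsified_adj {x y : V} (h : (sparsified β lam G).Adj x y) :
    ∃ z, Heavy β lam G z ∧ (sparsified β lam G).edist x z ≤ 1 ∧
      (sparsified β lam G).edist y z ≤ 1 := by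
  have hxy : (sparsified β lam G).edist x y ≤ 1 := (SimpleGraph.edist_eq_one_iff_adj.2 h).le
  rcases h.2 with hx | hy
  · exact ⟨x, hx, by simp, by rwa [SimpleGraph.edist_comm]⟩
  · exact ⟨y, hy, hxy, by simp⟩

theorem exists_heavy_near_of_reachable_heavy (hβ0 : 0 ≤ β) (hβ : β < 1 / 20)
    (hparams : 5 * β + 2 * lam < 1) {x w : V} (hw : Heavy β lam G w)
    (hr : (sparsified β lam G).Reachable x w) :
    ∃ y, Heavy β lam G y ∧ (sparsified β lam G).edist x y ≤ 1 ∧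
      (sparsified β lam G).edist y w ≤ 2 := by
  obtain ⟨p⟩ := hr
  induction p with
  | nil => exact ⟨_, hw, by simp, by simp⟩
  | @cons a b w hab p ih =>
    obtain ⟨y, -, hby, hyw⟩ := ih hw
    obtain ⟨z, hz, haz, hbz⟩ := exists_heavy_of_sparsified_adj hab
    refine ⟨z, hz, haz, hz.edist_le_two hw hβ0 hβ hparams ?_⟩
    calc (sparsified β lam G).edist z w
        ≤ (sparsified β lam G).edist z b + ((sparsified β lam G).edist b y
            + (sparsified β lam G).edist y w) :=
          SimpleGraph.edist_triangle.trans (add_le_add le_rfl SimpleGraph.edist_triangle)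
      _ ≤ 1 + (1 + 2) := by
          rw [SimpleGraph.edist_comm] at hbz
          gcongr
      _ = 4 := by norm_num

theorem edist_sparsified_le_four_of_reachable (hβ0 : 0 ≤ β) (hβ : β < 1 / 20)
    (hparams : 5 * β + 2 * lam < 1) {u v : V} (hr : (sparsified β lam G).Reachable u v) :
    (sparsified β lam G).edist u v ≤ 4 := by
  obtain ⟨p⟩ := hr.symm
  cases p with
  | nil => simp
  | @cons _ w _ hvw _ =>
    obtain ⟨z, hz, hvz, -⟩ := exists_heavy_of_sparsified_adj hvw
    have hvz' : (sparsified β lam G).Reachable v z :=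
      SimpleGraph.reachable_of_edist_ne_top (hvz.trans_lt (by decide)).ne
    obtain ⟨y, -, huy, hyz⟩ :=
      exists_heavy_near_of_reachable_heavy hβ0 hβ hparams hz (hr.trans hvz')
    calc (sparsified β lam G).edist u v
        ≤ (sparsified β lam G).edist u y + ((sparsified β lam G).edist y z
            + (sparsified β lam G).edist z v) :=
          SimpleGraph.edist_triangle.trans (add_le_add le_rfl SimpleGraph.edist_triangle)
      _ ≤ 1 + (2 + 1) := by
          rw [SimpleGraph.edist_comm] at hvz
          gcongr
      _ = 4 := by norm_num

theorem stmt6_general (G : SimpleGraph V) (β lam : ℝ)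
    (hβ0 : 0 < β) (hβ : β < 1 / 20)
    (hparams : 5 * β + 2 * lam < 1)
    (u v : V)
    (hreach : (sparsified β lam G).Reachable u v) :
    G.dist u v ≤ 2 ∧ (closedNbhd G u ∩ closedNbhd G v).Nonempty := by
  have hΔ := card_symmDiff_le_of_edist_le_four hβ0.le hβ
    ((SimpleGraph.edist_anti sparsified_le_agreeGraph).trans
      (edist_sparsified_le_four_of_reachable hβ0.le hβ hparams hreach))
  have hdv : (1 : ℝ) ≤ deg G v := by exact_mod_cast one_le_deg G v
  have hcommon : (closedNbhd G u ∩ closedNbhd G v).Nonempty := by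
    refine inter_nonempty_of_card_add_card_symmDiff_lt subset_rfl subset_rfl ?_
    unfold deg at hΔ hdv
    have key : (#(closedNbhd G u) + #(closedNbhd G v) + #(closedNbhd G u ∆ closedNbhd G v) : ℝ)
        < 2 * (#(closedNbhd G u) + #(closedNbhd G v)) := by
      nlinarith
    exact_mod_cast key
  exact ⟨ENat.toNat_le_of_le_natCast (edist_le_two_of_closedNbhd_inter_nonempty hcommon),
    hcommon⟩

/-- if `5β + 2λ < 1` and `β < 1/20`, and `u`, `v` lie in the
same connected component of the sparsified graph `G̃`, then `dist_G(u,v) ≤ 2`,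
i.e. `u` and `v` have a common (closed) neighbor in the original graph `G`. -/
theorem stmt6 (G : SimpleGraph V) (β lam : ℝ)
    (hβ0 : 0 < β) (hβ : β < 1 / 20) (hlam0 : 0 < lam)
    (hparams : 5 * β + 2 * lam < 1)
    (u v : V)
    (hreach : (sparsified β lam G).Reachable u v) :
    G.dist u v ≤ 2 ∧ (closedNbhd G u ∩ closedNbhd G v).Nonempty :=
  stmt6_general G β lam hβ0 hβ hparams u v hreach

end
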